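/- arXiv:2309.01626 — 6 statements merged into one kernel-verified Lean document; each statement's English description precedes it below -/
import Mathlib

section
/- The vertices of the order polytope O(P) of a finite poset P are exactly the characteristic vectors of order filters (upward-closed subsets) of P. -/
open scoped Classical

/-- The order polytope of a poset `P`. -/
def orderPolytope (P : Type*) [PartialOrder P] : Set (P → ℝ) :=
  {x | (∀ p, 0 ≤ x p ∧ x p ≤ 1) ∧ ∀ p q : P, p ≤ q → x p ≤ x q}

/-!
A `0/1`-vector is already extreme in the cube `[0, 1]^P ⊇ O(P)`. Conversely, every `x ∈ O(P)` is
the midpoint of `min (2x) 1` and `max (2x - 1) 0`, which lie in `O(P)` because they arise from `x`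
by monotone self-maps of `[0, 1]`. If `x` is extreme both must equal `x`, which forces `x` to be
`0/1`-valued, and then `{p | x p = 1}` is an order filter.
-/

open Set

namespace orderPolytope

variable {P : Type*} [PartialOrder P] {x : P → ℝ}

lemma subset_pi_Icc : orderPolytope P ⊆ univ.pi fun _ ↦ Icc 0 1 :=
  fun _ hx p _ ↦ hx.1 p

lemma comp_mem {f : ℝ → ℝ} (hmaps : MapsTo f (Icc 0 1) (Icc 0 1))
    (hf : MonotoneOn f (Icc 0 1)) (hx : x ∈ orderPolytope P) :
    f ∘ x ∈ orderPolytope P :=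
  ⟨fun p ↦ hmaps (hx.1 p), fun p q hpq ↦ hf (hx.1 p) (hx.1 q) (hx.2 p q hpq)⟩

lemma indicator_mem {U : Set P} (hU : IsUpperSet U) : U.indicator 1 ∈ orderPolytope P := by
  refine ⟨fun p ↦ ?_, fun p q hpq ↦ ?_⟩
  · by_cases hp : p ∈ U <;> simp [hp]
  · by_cases hp : p ∈ U
    · simp [hp, hU hpq hp]
    · simp [hp, indicator_nonneg]

lemma indicator_mem_extremePoints {U : Set P} (hU : IsUpperSet U) :
    U.indicator 1 ∈ extremePoints ℝ (orderPolytope P) := by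
  refine inter_extremePoints_subset_extremePoints_of_subset subset_pi_Icc ⟨indicator_mem hU, ?_⟩
  rw [extremePoints_pi]
  intro p _
  by_cases hp : p ∈ U <;> simp [hp]

lemma eq_zero_or_one_of_mem_extremePoints (hx : x ∈ extremePoints ℝ (orderPolytope P)) (p : P) :
    x p = 0 ∨ x p = 1 := by
  set up : ℝ → ℝ := fun t ↦ min (2 * t) 1
  set down : ℝ → ℝ := fun t ↦ max (2 * t - 1) 0
  have hup : up ∘ x ∈ orderPolytope P :=
    comp_mem (fun t ht ↦ ⟨le_min (by linarith [ht.1]) zero_le_one, min_le_right _ _⟩)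
      (fun s _ t _ hst ↦ min_le_min_right _ (by linarith)) hx.1
  have hdown : down ∘ x ∈ orderPolytope P :=
    comp_mem (fun t ht ↦ ⟨le_max_right _ _, max_le (by linarith [ht.2]) zero_le_one⟩)
      (fun s _ t _ hst ↦ max_le_max_right _ (by linarith)) hx.1
  have hmid : x ∈ openSegment ℝ (up ∘ x) (down ∘ x) := by
    refine ⟨1 / 2, 1 / 2, by norm_num, by norm_num, by norm_num, funext fun q ↦ ?_⟩
    simp only [Pi.add_apply, Pi.smul_apply, Function.comp_apply, smul_eq_mul, up, down]
    rcases le_total (2 * x q) 1 with h | h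
    · rw [min_eq_left h, max_eq_right (by linarith)]; ring
    · rw [min_eq_right h, max_eq_left (by linarith)]; ring
  have hfix : min (2 * x p) 1 = x p := congrFun (hx.2 hup hdown hmid) p
  rcases le_total (2 * x p) 1 with h | h
  · rw [min_eq_left h] at hfix; left; linarith
  · rw [min_eq_right h] at hfix; right; linarith

end orderPolytope

theorem orderPolytope_extremePoints_general (P : Type*) [PartialOrder P]
    (x : P → ℝ) :
    x ∈ Set.extremePoints ℝ (orderPolytope P) ↔
      ∃ U : Set P, (∀ p q : P, p ∈ U → p ≤ q → q ∈ U) ∧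
        x = fun p => if p ∈ U then (1 : ℝ) else 0 := by
  constructor
  · intro hx
    refine ⟨{p | x p = 1}, fun p q hp hpq ↦ ?_, funext fun p ↦ ?_⟩
    · exact le_antisymm (hx.1.1 q).2 (hp ▸ hx.1.2 p q hpq)
    · rcases orderPolytope.eq_zero_or_one_of_mem_extremePoints hx p with h | h <;> simp [h]
  · rintro ⟨U, hU, rfl⟩
    exact orderPolytope.indicator_mem_extremePoints fun p q hpq hp ↦ hU p q hp hpq

/-- The vertices (extreme points) of the order polytope of a finite poset are
exactly the characteristic vectors of order filters (upward-closed subsets). -/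
theorem orderPolytope_extremePoints (P : Type*) [PartialOrder P] [Fintype P]
    (x : P → ℝ) :
    x ∈ Set.extremePoints ℝ (orderPolytope P) ↔
      ∃ U : Set P, (∀ p q : P, p ∈ U → p ≤ q → q ∈ U) ∧
        x = fun p => if p ∈ U then (1 : ℝ) else 0 :=
  orderPolytope_extremePoints_general P x
end

section
/- The vertices of the chain polytope C(P) of a finite poset P are exactly the characteristic vectors of antichains of P. -/
open scoped Classical

/-- The chain polytope of a finite poset `P`. -/
def chainPolytope (P : Type*) [PartialOrder P] [Fintype P] : Set (P → ℝ) :=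
  {x | (∀ p, 0 ≤ x p) ∧
    ∀ s : Finset P, IsChain (· ≤ ·) (s : Set P) → ∑ p ∈ s, x p ≤ 1}

/-! A characteristic vector of an antichain is a 0/1 point of `C(P)`, hence an extreme point of the
cube `[0,1]^P` lying in `C(P)`. Conversely, for `x ∈ C(P)` let `A` be the antichain of maximal
elements of its support and `0 < t ≤ 1` a lower bound for `x` on `A`. A chain meeting `A` loses at
least `t` when `t • 1_A` is subtracted, and a chain missing `A` extends by an element of `A`, so all
chain sums of `x - t • 1_A` are at most `1 - t`. Hence `x = t • 1_A + (1 - t) • y` with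
`y ∈ C(P)` when `t < 1`, and an extreme `x` must be `1_A`; when `t = 1` the same chain bounds force
`x = 1_A` directly. -/

theorem IsChain.exists_maximal_insert {α : Type*} [Preorder α] [Finite α] {Q : α → Prop}
    {s : Set α} (hs : IsChain (· ≤ ·) s) (hne : s.Nonempty) (hQ : ∀ p ∈ s, Q p) :
    ∃ m, Maximal Q m ∧ IsChain (· ≤ ·) (insert m s) := by
  obtain ⟨c, hc⟩ := s.toFinite.exists_maximal hne
  obtain ⟨m, hcm, hm⟩ := Finite.exists_le_maximal (hQ c hc.1)
  have hle_c : ∀ b ∈ s, b ≤ c := fun b hb => by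
    rcases eq_or_ne b c with rfl | hbc
    · exact le_rfl
    · exact (hs hb hc.1 hbc).elim id fun hcb => hc.2 hb hcb
  exact ⟨m, hm, hs.insert fun b hb _ => Or.inr ((hle_c b hb).trans hcm)⟩

theorem Finset.exists_pos_le_one_forall_le {ι : Type*} (s : Finset ι) {f : ι → ℝ}
    (hf : ∀ i ∈ s, 0 < f i) : ∃ t, 0 < t ∧ t ≤ 1 ∧ ∀ i ∈ s, t ≤ f i := by
  set T := insert 1 (s.image f)
  refine ⟨T.min' (insert_nonempty _ _), ?_, T.min'_le _ (mem_insert_self _ _),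
    fun i hi => T.min'_le _ (mem_insert_of_mem (mem_image_of_mem f hi))⟩
  rw [lt_min'_iff]
  simp only [T, mem_insert, mem_image]
  rintro _ (rfl | ⟨i, hi, rfl⟩)
  exacts [zero_lt_one, hf i hi]

theorem IsAntichain.sum_indicator_le_one {α : Type*} [LE α] {A : Set α}
    (hA : IsAntichain (· ≤ ·) A) {s : Finset α} (hs : IsChain (· ≤ ·) (s : Set α)) :
    ∑ p ∈ s, A.indicator (1 : α → ℝ) p ≤ 1 := by
  have hsub : ((s.filter (· ∈ A) : Finset α) : Set α).Subsingleton := by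
    rw [Finset.coe_filter]
    exact inter_subsingleton_of_isChain_of_isAntichain hs hA
  rw [Finset.sum_indicator_eq_sum_filter]
  simp only [Pi.one_apply, Finset.sum_const, nsmul_eq_mul, mul_one, Nat.cast_le_one]
  exact Finset.card_le_one.2 fun a ha b hb => hsub ha hb

section ChainPolytope

variable {P : Type*} [PartialOrder P] [Fintype P] {x : P → ℝ}

theorem le_one_of_mem_chainPolytope (hx : x ∈ chainPolytope P) (p : P) : x p ≤ 1 := by
  simpa using hx.2 {p} (by simp)

theorem chainPolytope_subset_pi_Icc :
    chainPolytope P ⊆ Set.univ.pi fun _ => Set.Icc 0 1 :=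
  fun _ hx p _ => ⟨hx.1 p, le_one_of_mem_chainPolytope hx p⟩

theorem IsAntichain.indicator_mem_chainPolytope {A : Set P} (hA : IsAntichain (· ≤ ·) A) :
    A.indicator 1 ∈ chainPolytope P :=
  ⟨fun p => Set.indicator_nonneg (fun _ _ => zero_le_one) p,
    fun _ hs => hA.sum_indicator_le_one hs⟩

theorem IsAntichain.indicator_mem_extremePoints_chainPolytope {A : Set P}
    (hA : IsAntichain (· ≤ ·) A) :
    A.indicator 1 ∈ (chainPolytope P).extremePoints ℝ := by
  refine inter_extremePoints_subset_extremePoints_of_subset chainPolytope_subset_pi_Icc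
    ⟨hA.indicator_mem_chainPolytope, ?_⟩
  rw [extremePoints_pi]
  intro p _
  rw [Set.extremePoints_Icc zero_le_one, Set.indicator_apply]
  split_ifs <;> simp

theorem inv_smul_mem_chainPolytope {z : P → ℝ} {c : ℝ} (hc : 0 < c) (hz : ∀ p, 0 ≤ z p)
    (hzs : ∀ s : Finset P, IsChain (· ≤ ·) (s : Set P) → ∑ p ∈ s, z p ≤ c) :
    c⁻¹ • z ∈ chainPolytope P := by
  refine ⟨fun p => by simpa using mul_nonneg (inv_nonneg.2 hc.le) (hz p), fun s hs => ?_⟩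
  simp only [Pi.smul_apply, smul_eq_mul, ← Finset.mul_sum]
  rw [inv_mul_le_iff₀ hc, mul_one]
  exact hzs s hs

theorem sub_smul_indicator_mem_chainPolytope (hx : x ∈ chainPolytope P) {A : Set P} {t : ℝ}
    (ht0 : 0 ≤ t) (ht1 : t < 1) (htA : ∀ a ∈ A, t ≤ x a)
    (hmiss : ∀ s : Finset P, IsChain (· ≤ ·) (s : Set P) → (∀ p ∈ s, p ∉ A) →
      ∑ p ∈ s, x p ≤ 1 - t) :
    (1 - t)⁻¹ • (x - t • A.indicator 1) ∈ chainPolytope P := by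
  refine inv_smul_mem_chainPolytope (by linarith) (fun p => ?_) (fun s hs => ?_)
  · by_cases hp : p ∈ A
    · simpa [hp] using htA p hp
    · simpa [hp] using hx.1 p
  · simp only [Pi.sub_apply, Pi.smul_apply, smul_eq_mul, Finset.sum_sub_distrib,
      ← Finset.mul_sum]
    by_cases hsA : ∀ p ∈ s, p ∉ A
    · rw [Finset.sum_eq_zero fun p hp => Set.indicator_of_notMem (hsA p hp) _]
      linarith [hmiss s hs hsA]
    · push Not at hsA
      obtain ⟨a, has, ha⟩ := hsA
      have hone : 1 ≤ ∑ p ∈ s, A.indicator (1 : P → ℝ) p := by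
        simpa [ha] using Finset.single_le_sum
          (f := A.indicator (1 : P → ℝ))
          (fun p _ => Set.indicator_nonneg (fun _ _ => zero_le_one) p) has
      nlinarith [hx.2 s hs]

/-- A chain avoiding the maximal elements of the support of `x` extends by one of them, whose
weight is at least `t`. -/
theorem sum_le_one_sub_of_forall_not_maximal (hx : x ∈ chainPolytope P) {t : ℝ} (ht1 : t ≤ 1)
    (ht : ∀ a, Maximal (x · ≠ 0) a → t ≤ x a) {s : Finset P}
    (hs : IsChain (· ≤ ·) (s : Set P)) (hsA : ∀ p ∈ s, ¬ Maximal (x · ≠ 0) p) :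
    ∑ p ∈ s, x p ≤ 1 - t := by
  rw [← Finset.sum_filter_ne_zero]
  set s' := s.filter (x · ≠ 0)
  rcases s'.eq_empty_or_nonempty with hs' | hs'
  · simp [hs', ht1]
  have hs'chain : IsChain (· ≤ ·) (s' : Set P) :=
    hs.mono (Finset.coe_subset.2 (Finset.filter_subset _ _))
  obtain ⟨m, hm, hchain⟩ :=
    hs'chain.exists_maximal_insert hs' fun p hp => (Finset.mem_filter.1 hp).2
  have hms' : m ∉ s' := fun h => hsA m (Finset.mem_filter.1 h).1 hm
  have hsum := hx.2 (insert m s') (by rwa [Finset.coe_insert])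
  rw [Finset.sum_insert hms'] at hsum
  linarith [ht m hm]

theorem eq_indicator_of_mem_extremePoints (hx : x ∈ (chainPolytope P).extremePoints ℝ) :
    x = {p | Maximal (x · ≠ 0) p}.indicator 1 := by
  set A := {p | Maximal (x · ≠ 0) p}
  have hpos : ∀ a ∈ A, 0 < x a := fun a ha => (hx.1.1 a).lt_of_ne' ha.1
  obtain ⟨t, ht0, ht1, htA⟩ := A.toFinset.exists_pos_le_one_forall_le fun a ha =>
    hpos a (Set.mem_toFinset.1 ha)
  simp only [Set.mem_toFinset] at htA
  have hmiss := fun s => sum_le_one_sub_of_forall_not_maximal hx.1 ht1 htA (s := s)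
  rcases ht1.lt_or_eq with ht1 | rfl
  · have hy := sub_smul_indicator_mem_chainPolytope hx.1 ht0.le ht1 htA hmiss
    have hseg : x ∈ openSegment ℝ (A.indicator 1) ((1 - t)⁻¹ • (x - t • A.indicator 1)) := by
      refine ⟨t, 1 - t, ht0, by linarith, by ring, ?_⟩
      rw [smul_smul, mul_inv_cancel₀ (by linarith), one_smul, add_sub_cancel]
    exact (hx.2 (setOfPred_maximal_antichain _).indicator_mem_chainPolytope hy hseg).symm
  · funext p
    by_cases hp : p ∈ A
    · simpa [hp] using le_antisymm (le_one_of_mem_chainPolytope hx.1 p) (htA p hp)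
    · have := hmiss {p} (by simp) fun q hq => by rwa [Finset.mem_singleton.1 hq]
      simp only [Finset.sum_singleton, sub_self] at this
      simpa [hp] using le_antisymm this (hx.1.1 p)

end ChainPolytope

/-- The vertices (extreme points) of the chain polytope of a finite poset are
exactly the characteristic vectors of antichains. -/
theorem chainPolytope_extremePoints (P : Type*) [PartialOrder P] [Fintype P]
    (x : P → ℝ) :
    x ∈ Set.extremePoints ℝ (chainPolytope P) ↔
      ∃ A : Set P, IsAntichain (· ≤ ·) A ∧
        x = fun p => if p ∈ A then (1 : ℝ) else 0 := by
  constructor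
  · exact fun hx => ⟨_, setOfPred_maximal_antichain _, eq_indicator_of_mem_extremePoints hx⟩
  · rintro ⟨A, hA, rfl⟩
    exact hA.indicator_mem_extremePoints_chainPolytope
end

section
/- If two finite posets P and Q have isomorphic comparability graphs, then their chain polytopes C(P) and C(Q) are equal up to the induced relabeling of coordinates. More precisely, if f : P → Q is a bijection such that p, p' are comparable in P iff f(p), f(p') are comparable in Q, then x ∈ C(P) iff x ∘ f⁻¹ ∈ C(Q). -/
theorem IsChain.image_of_comparable {α β : Type*} [LE α] [LE β] {f : α → β}
    (hf : ∀ a a', a ≤ a' ∨ a' ≤ a → f a ≤ f a' ∨ f a' ≤ f a)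
    {s : Set α} (hs : IsChain (· ≤ ·) s) : IsChain (· ≤ ·) (f '' s) := by
  rintro _ ⟨a, ha, rfl⟩ _ ⟨a', ha', rfl⟩ hne
  exact hf a a' (hs ha ha' (ne_of_apply_ne f hne))

theorem comp_mem_chainPolytope {P Q : Type*} [PartialOrder P] [Fintype P]
    [PartialOrder Q] [Fintype Q] (e : Q ↪ P)
    (he : ∀ q q', q ≤ q' ∨ q' ≤ q → e q ≤ e q' ∨ e q' ≤ e q)
    {x : P → ℝ} (hx : x ∈ chainPolytope P) : x ∘ e ∈ chainPolytope Q := by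
  obtain ⟨hx_nonneg, hx_chain⟩ := hx
  refine ⟨fun q => hx_nonneg (e q), fun s hs => ?_⟩
  have hs' : IsChain (· ≤ ·) (s.map e : Set P) := by
    rw [Finset.coe_map]
    exact hs.image_of_comparable he
  simpa only [Finset.sum_map, Function.comp_apply] using hx_chain (s.map e) hs'

/-- If `f : P ≃ Q` is a bijection between finite posets preserving
comparability (an isomorphism of comparability graphs), then
`x ∈ C(P)` iff `x ∘ f⁻¹ ∈ C(Q)`. -/
theorem chainPolytope_comparability_invariant
    {P Q : Type*} [PartialOrder P] [Fintype P] [PartialOrder Q] [Fintype Q]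
    (f : P ≃ Q)
    (hf : ∀ p p' : P, (p ≤ p' ∨ p' ≤ p) ↔ (f p ≤ f p' ∨ f p' ≤ f p))
    (x : P → ℝ) :
    x ∈ chainPolytope P ↔ (x ∘ f.symm) ∈ chainPolytope Q := by
  refine ⟨comp_mem_chainPolytope f.symm.toEmbedding fun q q' h => ?_, fun h => ?_⟩
  · simpa using (hf (f.symm q) (f.symm q')).mpr (by simpa using h)
  · simpa [Function.comp_assoc] using
      comp_mem_chainPolytope f.toEmbedding (fun p p' => (hf p p').mp) h
end

section
/- Let P_τ be a maximal ranked poset with ℓ ranks and n = Σ τ_i elements, 0 ≤ k ≤ ℓ, and let P_τ = C ⊔ O be the k-decomposition (C = elements of rank ≤ k together with 0̂, O = the rest together with 1̂). Then the chain-order polytope O_{C,O}(τ), defined by x_{0̂} = 0, x_{1̂} = 1, x_p ≥ 0 for p ∈ C, x_a ≤ x_b for covering relations a ⋖ b with a, b ∈ O, and x_{p_1} + ⋯ + x_{p_k} ≤ x_q for all choices p_i ∈ Y^i (1 ≤ i ≤ k) and q ∈ Y^{k+1}, has dimension n. -/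
/-- The underlying set of the maximal ranked poset `P_τ`: the disjoint union
of rank sets `Y^i` with `|Y^i| = τ i`. -/
abbrev MaxRanked (ℓ : ℕ) (τ : Fin ℓ → ℕ) := Σ i : Fin ℓ, Fin (τ i)

/-- The order of the maximal ranked poset: `x < y` iff `rank x < rank y`. -/
instance MaxRanked.instPartialOrder (ℓ : ℕ) (τ : Fin ℓ → ℕ) :
    PartialOrder (MaxRanked ℓ τ) where
  le x y := x = y ∨ x.1 < y.1
  lt x y := x.1 < y.1
  le_refl x := Or.inl rfl
  le_trans x y z hxy hyz := by
    rcases hxy with rfl | h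
    · exact hyz
    · rcases hyz with rfl | h'
      · exact Or.inr h
      · exact Or.inr (h.trans h')
  lt_iff_le_not_ge x y := by
    constructor
    · intro h
      refine ⟨Or.inr h, ?_⟩
      rintro (rfl | h')
      · exact absurd h (lt_irrefl y.1)
      · exact absurd (h.trans h') (lt_irrefl x.1)
    · rintro ⟨rfl | h, hn⟩
      · exact absurd (Or.inl rfl) hn
      · exact h
  le_antisymm x y hxy hyx := by
    rcases hxy with rfl | h
    · rfl
    · rcases hyx with rfl | h'
      · rfl
      · exact absurd (h.trans h') (lt_irrefl x.1)

/-- The chain-order polytope `O_{C,O}(τ)` of the `k`-decomposition of the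
maximal ranked poset `P_τ` (ranks are indexed by `Fin ℓ`, so the paper's rank
`i` corresponds to index `i - 1`; the chain part `C` consists of the ranks
with index `< k`, together with `0̂`, and the order part `O` of the remaining
ranks together with `1̂`; the coordinates of `0̂` and `1̂` are fixed to `0`
and `1`). -/
def chainOrderPolytope (ℓ : ℕ) (τ : Fin ℓ → ℕ) (k : ℕ) :
    Set (MaxRanked ℓ τ → ℝ) :=
  {x | (∀ p : MaxRanked ℓ τ, (p.1 : ℕ) < k → 0 ≤ x p) ∧
    (∀ p q : MaxRanked ℓ τ, k ≤ (p.1 : ℕ) → (q.1 : ℕ) = (p.1 : ℕ) + 1 →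
      x p ≤ x q) ∧
    (∀ p : MaxRanked ℓ τ, k ≤ (p.1 : ℕ) → (p.1 : ℕ) = ℓ - 1 → x p ≤ 1) ∧
    (∀ (c : ∀ i : Fin ℓ, Fin (τ i)) (q : MaxRanked ℓ τ), (q.1 : ℕ) = k →
      ∑ i ∈ Finset.univ.filter (fun i : Fin ℓ => (i : ℕ) < k),
        x ⟨i, c i⟩ ≤ x q) ∧
    (k = ℓ → ∀ c : ∀ i : Fin ℓ, Fin (τ i), ∑ i : Fin ℓ, x ⟨i, c i⟩ ≤ 1)}

/-!
A set with nonempty interior spans the whole ambient space. The point `c` with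
`c p = d / 4` on the chain ranks and `c p = (i + 1) d` on an order rank `i ≥ k`, where
`d = 1 / (ℓ + 1)`, satisfies every defining inequality with slack at least `d / 4` in each
coordinate: the order part climbs by `d` per rank and ends at `1 - d`, while a chain of at most
`k` chain-rank entries sums to at most `k d / 2 < (k + 1) d - d / 4`. Hence the sup-norm ball of
radius `d / 4` around `c` lies in the polytope.
-/

theorem vectorSpan_eq_top_of_interior_nonempty {V : Type*} [NormedAddCommGroup V]
    [NormedSpace ℝ V] {s : Set V} (hs : (interior s).Nonempty) : vectorSpan ℝ s = ⊤ :=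
  AffineSubspace.vectorSpan_eq_top_of_affineSpan_eq_top ℝ V V <|
    affineSpan_eq_top_of_nonempty_interior <| hs.mono <| interior_mono <| subset_convexHull ℝ s

section

variable {ℓ : ℕ} {τ : Fin ℓ → ℕ} {k : ℕ} {y : MaxRanked ℓ τ → ℝ}

noncomputable def chainOrderCenter (ℓ : ℕ) (τ : Fin ℓ → ℕ) (k : ℕ) : MaxRanked ℓ τ → ℝ :=
  fun p => if (p.1 : ℕ) < k then (ℓ + 1 : ℝ)⁻¹ / 4 else ((p.1 : ℕ) + 1) * (ℓ + 1 : ℝ)⁻¹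

theorem abs_sub_chainOrderCenter_le
    (hy : y ∈ Metric.ball (chainOrderCenter ℓ τ k) ((ℓ + 1 : ℝ)⁻¹ / 4)) (p : MaxRanked ℓ τ) :
    |y p - chainOrderCenter ℓ τ k p| ≤ (ℓ + 1 : ℝ)⁻¹ / 4 :=
  (dist_le_pi_dist y _ p).trans (Metric.mem_ball.1 hy).le

theorem mem_Icc_of_mem_ball_chainOrderCenter_of_lt
    (hy : y ∈ Metric.ball (chainOrderCenter ℓ τ k) ((ℓ + 1 : ℝ)⁻¹ / 4)) {p : MaxRanked ℓ τ}
    (hp : (p.1 : ℕ) < k) : y p ∈ Set.Icc 0 ((ℓ + 1 : ℝ)⁻¹ / 2) := by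
  have h := abs_le.1 (abs_sub_chainOrderCenter_le hy p)
  rw [chainOrderCenter, if_pos hp] at h
  constructor <;> linarith [h.1, h.2]

theorem abs_sub_le_of_mem_ball_chainOrderCenter_of_le
    (hy : y ∈ Metric.ball (chainOrderCenter ℓ τ k) ((ℓ + 1 : ℝ)⁻¹ / 4)) {p : MaxRanked ℓ τ}
    (hp : k ≤ (p.1 : ℕ)) :
    |y p - ((p.1 : ℕ) + 1) * (ℓ + 1 : ℝ)⁻¹| ≤ (ℓ + 1 : ℝ)⁻¹ / 4 := by
  simpa only [chainOrderCenter, if_neg hp.not_gt] using abs_sub_chainOrderCenter_le hy p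

theorem sum_le_of_mem_ball_chainOrderCenter
    (hy : y ∈ Metric.ball (chainOrderCenter ℓ τ k) ((ℓ + 1 : ℝ)⁻¹ / 4))
    (c : ∀ i : Fin ℓ, Fin (τ i)) {S : Finset (Fin ℓ)} (hS : ∀ i ∈ S, (i : ℕ) < k) :
    ∑ i ∈ S, y ⟨i, c i⟩ ≤ S.card * ((ℓ + 1 : ℝ)⁻¹ / 2) := by
  simpa using Finset.sum_le_sum fun i hi =>
    (mem_Icc_of_mem_ball_chainOrderCenter_of_lt hy (hS i hi)).2

theorem ball_chainOrderCenter_subset :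
    Metric.ball (chainOrderCenter ℓ τ k) ((ℓ + 1 : ℝ)⁻¹ / 4) ⊆ chainOrderPolytope ℓ τ k := by
  intro y hy
  have hd : 0 < (ℓ + 1 : ℝ)⁻¹ := by positivity
  have hℓd : (ℓ + 1 : ℝ) * (ℓ + 1 : ℝ)⁻¹ = 1 := mul_inv_cancel₀ (by positivity)
  have hO {p : MaxRanked ℓ τ} (hp : k ≤ (p.1 : ℕ)) :=
    abs_le.1 (abs_sub_le_of_mem_ball_chainOrderCenter_of_le hy hp)
  refine ⟨fun p hp => (mem_Icc_of_mem_ball_chainOrderCenter_of_lt hy hp).1, ?_, ?_, ?_, ?_⟩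
  · intro p q hp hq
    have hq' := (hO (p := q) (by omega)).1
    rw [hq] at hq'
    push_cast at hq'
    linarith [(hO hp).2]
  · intro p hp htop
    have hrank : ((p.1 : ℕ) : ℝ) + 1 = ℓ := by
      have := p.1.isLt
      norm_cast
      omega
    linarith [hrank ▸ (hO hp).2]
  · intro c q hq
    have hcard : ((Finset.univ.filter fun i : Fin ℓ => (i : ℕ) < k).card : ℝ) ≤ k := by
      exact_mod_cast Fin.card_filter_val_lt.trans_le (min_le_right _ _)
    have hsum := (sum_le_of_mem_ball_chainOrderCenter hy c fun i hi =>
      (Finset.mem_filter.1 hi).2).trans (mul_le_mul_of_nonneg_right hcard (by positivity))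
    have hq' := (hO hq.ge).1
    rw [hq] at hq'
    linarith [mul_nonneg (Nat.cast_nonneg k) hd.le]
  · rintro rfl c
    have hsum := sum_le_of_mem_ball_chainOrderCenter hy c (S := Finset.univ) fun i _ => i.isLt
    rw [Finset.card_univ, Fintype.card_fin] at hsum
    linarith

end

theorem chainOrderPolytope_fullDimensional_general (ℓ : ℕ) (τ : Fin ℓ → ℕ) (k : ℕ) :
    Module.finrank ℝ (vectorSpan ℝ (chainOrderPolytope ℓ τ k)) =
      ∑ i : Fin ℓ, τ i := by
  have hcenter : chainOrderCenter ℓ τ k ∈ interior (chainOrderPolytope ℓ τ k) :=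
    interior_mono ball_chainOrderCenter_subset <| by
      rw [Metric.isOpen_ball.interior_eq]
      exact Metric.mem_ball_self (by positivity)
  rw [vectorSpan_eq_top_of_interior_nonempty ⟨_, hcenter⟩, finrank_top,
    Module.finrank_fintype_fun_eq_card, Fintype.card_sigma]
  simp

/-- The chain-order polytope of any `k`-decomposition of the maximal ranked
poset `P_τ` is full-dimensional: its dimension is `n = ∑ τ_i`. -/
theorem chainOrderPolytope_fullDimensional (ℓ : ℕ) (τ : Fin ℓ → ℕ)
    (hτ : ∀ i, 0 < τ i) (k : ℕ) (hk : k ≤ ℓ) :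
    Module.finrank ℝ (vectorSpan ℝ (chainOrderPolytope ℓ τ k)) =
      ∑ i : Fin ℓ, τ i :=
  chainOrderPolytope_fullDimensional_general ℓ τ k
end

section
/- Let P_τ = C ⊔ O be a k-decomposition of a maximal ranked poset, F the face of the chain-order polytope O_{C,O}(τ) defined by two tight chain equalities x_{p_1}+⋯+x_{p_k} = x_a and x_{p'_1}+⋯+x_{p'_k} = x_{a'}, where p_i, p'_i ∈ Y^i and a, a' ∈ Y^{k+1}. Then every point of F satisfies x_{p_i} = x_{p'_i} for all 1 ≤ i ≤ k, and if a ≠ a' also x_a = x_{a'}. -/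
/-!
If a sum `∑ i ∈ s, f i (d i)` is bounded by `m` for every choice `d` and the choice `c` attains
the bound, then replacing the single entry `c i` by any `b` cannot increase the sum, so
`f i b ≤ f i (c i)`. Two tight chains therefore dominate each other coordinatewise, hence agree,
and so do their sums `x_a` and `x_{a'}`.
-/

open Finset

section TightSum

variable {ι M : Type*} [DecidableEq ι] {β : ι → Type*}
  [AddCommMonoid M] [PartialOrder M] [IsOrderedCancelAddMonoid M]
  {s : Finset ι} {f : ∀ i, β i → M} {m : M}

theorem le_apply_of_sum_le_of_sum_eq (hle : ∀ d : ∀ i, β i, ∑ j ∈ s, f j (d j) ≤ m)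
    {c : ∀ i, β i} (heq : ∑ j ∈ s, f j (c j) = m) {i : ι} (hi : i ∈ s) (b : β i) :
    f i b ≤ f i (c i) := by
  have hupdate := hle (Function.update c i b)
  simp only [Function.apply_update f c i b] at hupdate
  rw [sum_update_of_mem hi, ← heq, ← add_sum_erase s _ hi, sdiff_singleton_eq_erase] at hupdate
  exact le_of_add_le_add_right hupdate

theorem apply_eq_of_sum_le_of_sum_eq {m' : M}
    (hle : ∀ d : ∀ i, β i, ∑ j ∈ s, f j (d j) ≤ m)
    (hle' : ∀ d : ∀ i, β i, ∑ j ∈ s, f j (d j) ≤ m')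
    {c c' : ∀ i, β i} (heq : ∑ j ∈ s, f j (c j) = m) (heq' : ∑ j ∈ s, f j (c' j) = m') :
    (∀ i ∈ s, f i (c i) = f i (c' i)) ∧ m = m' := by
  have hcoord : ∀ i ∈ s, f i (c i) = f i (c' i) := fun i hi =>
    le_antisymm (le_apply_of_sum_le_of_sum_eq hle' heq' hi _)
      (le_apply_of_sum_le_of_sum_eq hle heq hi _)
  exact ⟨hcoord, heq ▸ heq' ▸ sum_congr rfl hcoord⟩

end TightSum

theorem two_tight_chains_general (ℓ : ℕ) (τ : Fin ℓ → ℕ)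
    (k : ℕ)
    (c c' : ∀ i : Fin ℓ, Fin (τ i)) (qa qa' : MaxRanked ℓ τ)
    (hqa : (qa.1 : ℕ) = k) (hqa' : (qa'.1 : ℕ) = k)
    (x : MaxRanked ℓ τ → ℝ) (hx : x ∈ chainOrderPolytope ℓ τ k)
    (heq : ∑ i ∈ Finset.univ.filter (fun i : Fin ℓ => (i : ℕ) < k),
        x ⟨i, c i⟩ = x qa)
    (heq' : ∑ i ∈ Finset.univ.filter (fun i : Fin ℓ => (i : ℕ) < k),
        x ⟨i, c' i⟩ = x qa') :
    (∀ i : Fin ℓ, (i : ℕ) < k → x ⟨i, c i⟩ = x ⟨i, c' i⟩) ∧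
    (qa ≠ qa' → x qa = x qa') := by
  have hchain := hx.2.2.2.1
  obtain ⟨hcoord, htop⟩ :=
    apply_eq_of_sum_le_of_sum_eq (f := fun i p => x ⟨i, p⟩)
      (fun d => hchain d qa hqa) (fun d => hchain d qa' hqa') heq heq'
  exact ⟨fun i hi => hcoord i (mem_filter.mpr ⟨mem_univ i, hi⟩), fun _ => htop⟩

/-- On the face of the chain-order polytope of a `k`-decomposition of `P_τ`
where the two chain inequalities given by `(p_1, …, p_k, a)` and
`(p'_1, …, p'_k, a')` are tight, every point satisfies `x_{p_i} = x_{p'_i}`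
for all `i ≤ k`, and `x_a = x_{a'}` if `a ≠ a'`. -/
theorem two_tight_chains (ℓ : ℕ) (τ : Fin ℓ → ℕ) (hτ : ∀ i, 0 < τ i)
    (k : ℕ) (hk : k < ℓ)
    (c c' : ∀ i : Fin ℓ, Fin (τ i)) (qa qa' : MaxRanked ℓ τ)
    (hqa : (qa.1 : ℕ) = k) (hqa' : (qa'.1 : ℕ) = k)
    (x : MaxRanked ℓ τ → ℝ) (hx : x ∈ chainOrderPolytope ℓ τ k)
    (heq : ∑ i ∈ Finset.univ.filter (fun i : Fin ℓ => (i : ℕ) < k),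
        x ⟨i, c i⟩ = x qa)
    (heq' : ∑ i ∈ Finset.univ.filter (fun i : Fin ℓ => (i : ℕ) < k),
        x ⟨i, c' i⟩ = x qa') :
    (∀ i : Fin ℓ, (i : ℕ) < k → x ⟨i, c i⟩ = x ⟨i, c' i⟩) ∧
    (qa ≠ qa' → x qa = x qa') :=
  two_tight_chains_general ℓ τ k c c' qa qa' hqa hqa' x hx heq heq'
end

section
/- Let P_τ = C ⊔ O be a k-decomposition of a maximal ranked poset with k ≥ 1, b ∈ Y^i for some 1 ≤ i ≤ k with τ_i ≥ 2, and F the face of O_{C,O}(τ) given by x_b = 0. Then the coordinate projection forgetting x_b is an affine isomorphism from F onto the chain-order polytope O_{C̃,O}(τ̃) where τ̃ = (τ_1,…,τ_{i−1}, τ_i − 1, τ_{i+1},…,τ_ℓ) and C̃ = C \ {b}. -/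
/-!
Forgetting `x_b` and extending by zero at `b` are mutually inverse between the face and
`O_{C̃,O}(τ̃)`. Both directions are instances of two stability properties of chain-order
polytopes: pulling back along a rank-preserving map of maximal ranked posets preserves
membership (chains go to chains and coverings to coverings), and so does setting to zero a
coordinate in the chain part, since that only lowers the left-hand sides of chain
inequalities. For the extension one pulls back along a rank-preserving left inverse of `j`,
which exists because `τ_i ≥ 2` leaves the rank of `b` nonempty in `P_τ̃`.
-/

namespace MaxRanked

variable {ℓ : ℕ} {σ τ : Fin ℓ → ℕ}

def mapChain (f : MaxRanked ℓ σ → MaxRanked ℓ τ) (hf : ∀ p, (f p).1 = p.1)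
    (c : ∀ i, Fin (σ i)) (i : Fin ℓ) : Fin (τ i) :=
  Fin.cast (congrArg τ (hf ⟨i, c i⟩)) (f ⟨i, c i⟩).2

theorem mk_mapChain (f : MaxRanked ℓ σ → MaxRanked ℓ τ) (hf : ∀ p, (f p).1 = p.1)
    (c : ∀ i, Fin (σ i)) (i : Fin ℓ) :
    (⟨i, mapChain f hf c i⟩ : MaxRanked ℓ τ) = f ⟨i, c i⟩ :=
  Sigma.ext (hf ⟨i, c i⟩).symm <| (Fin.heq_ext_iff (congrArg τ (hf ⟨i, c i⟩).symm)).mpr rfl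

theorem exists_leftInverse_of_rank_preserving (j : MaxRanked ℓ σ → MaxRanked ℓ τ)
    (hj : Function.Injective j) (hjrank : ∀ p, (j p).1 = p.1)
    (hσ : ∀ q, q ∉ Set.range j → 0 < σ q.1) :
    ∃ h : MaxRanked ℓ τ → MaxRanked ℓ σ, (∀ q, (h q).1 = q.1) ∧ Function.LeftInverse h j := by
  classical
  refine ⟨fun q => if hq : q ∈ Set.range j then hq.choose else ⟨q.1, 0, hσ q hq⟩,
    fun q => ?_, fun p => ?_⟩
  · dsimp only
    split_ifs with hq
    · rw [← hjrank, hq.choose_spec]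
    · rfl
  · simp only [dif_pos (Set.mem_range_self p)]
    exact hj (Set.mem_range_self p).choose_spec

end MaxRanked

section

open MaxRanked

variable {ℓ : ℕ} {σ τ : Fin ℓ → ℕ} {k : ℕ}

theorem comp_mem_chainOrderPolytope {x : MaxRanked ℓ τ → ℝ}
    (hx : x ∈ chainOrderPolytope ℓ τ k) (f : MaxRanked ℓ σ → MaxRanked ℓ τ)
    (hf : ∀ p, (f p).1 = p.1) : x ∘ f ∈ chainOrderPolytope ℓ σ k := by
  obtain ⟨hnonneg, hmono, hle_one, hchain, hchain_top⟩ := hx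
  refine ⟨fun p hp => hnonneg (f p) (by rwa [hf]),
    fun p q hp hq => hmono (f p) (f q) (by rwa [hf]) (by rwa [hf, hf]),
    fun p hp hp' => hle_one (f p) (by rwa [hf]) (by rwa [hf]), fun c q hq => ?_,
    fun hkℓ c => ?_⟩
  · simpa only [Function.comp_apply, ← mk_mapChain f hf c] using
      hchain (mapChain f hf c) (f q) (by rwa [hf])
  · simpa only [Function.comp_apply, ← mk_mapChain f hf c] using
      hchain_top hkℓ (mapChain f hf c)

theorem update_zero_mem_chainOrderPolytope {x : MaxRanked ℓ τ → ℝ}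
    (hx : x ∈ chainOrderPolytope ℓ τ k) {b : MaxRanked ℓ τ} (hb : (b.1 : ℕ) < k) :
    Function.update x b 0 ∈ chainOrderPolytope ℓ τ k := by
  obtain ⟨hnonneg, hmono, hle_one, hchain, hchain_top⟩ := hx
  have hle : ∀ p, Function.update x b 0 p ≤ x p := fun p => by
    rcases eq_or_ne p b with rfl | hp
    · simpa using hnonneg p hb
    · rw [Function.update_of_ne hp]
  have heq : ∀ p : MaxRanked ℓ τ, k ≤ (p.1 : ℕ) → Function.update x b 0 p = x p :=
    fun p hp => Function.update_of_ne (by rintro rfl; omega) _ _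
  refine ⟨fun p hp => ?_, fun p q hp hq => ?_, fun p hp hp' => ?_, fun c q hq => ?_,
    fun hkℓ c => ?_⟩
  · rcases eq_or_ne p b with rfl | hpb
    · simp
    · simpa [Function.update_of_ne hpb] using hnonneg p hp
  · rw [heq p hp, heq q (by omega)]
    exact hmono p q hp hq
  · rw [heq p hp]
    exact hle_one p hp hp'
  · rw [heq q hq.ge]
    exact (Finset.sum_le_sum fun i _ => hle _).trans (hchain c q hq)
  · exact (Finset.sum_le_sum fun i _ => hle _).trans (hchain_top hkℓ c)

theorem face_zero_coordinate_iso_general (ℓ : ℕ) (τ : Fin ℓ → ℕ)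
    (k : ℕ) (b : MaxRanked ℓ τ) (hbk : (b.1 : ℕ) < k)
    (hb2 : 2 ≤ τ b.1)
    (j : MaxRanked ℓ (Function.update τ b.1 (τ b.1 - 1)) → MaxRanked ℓ τ)
    (hj : Function.Injective j)
    (hjrank : ∀ p, (j p).1 = p.1)
    (hjrange : Set.range j = {q : MaxRanked ℓ τ | q ≠ b}) :
    Set.BijOn (fun x : MaxRanked ℓ τ → ℝ => x ∘ j)
      {x ∈ chainOrderPolytope ℓ τ k | x b = 0}
      (chainOrderPolytope ℓ (Function.update τ b.1 (τ b.1 - 1)) k) := by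
  have hjb : ∀ p, j p ≠ b := fun p => by simpa [hjrange] using Set.mem_range_self (f := j) p
  obtain ⟨h, hrank, hleft⟩ := exists_leftInverse_of_rank_preserving j hj hjrank fun q hq => by
    obtain rfl : q = b := by simpa [hjrange] using hq
    simp only [Function.update_self]
    omega
  refine Set.InvOn.bijOn (f' := fun y => Function.update (y ∘ h) b 0) ⟨?_, ?_⟩ ?_ ?_
  · rintro x ⟨-, hxb⟩
    funext q
    rcases eq_or_ne q b with rfl | hq
    · simp [hxb]
    · obtain ⟨p, rfl⟩ : q ∈ Set.range j := hjrange ▸ hq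
      simp [Function.update_of_ne hq, hleft p]
  · intro y _
    funext p
    simp [Function.update_of_ne (hjb p), hleft p]
  · rintro x ⟨hx, -⟩
    exact comp_mem_chainOrderPolytope hx j hjrank
  · intro y hy
    exact ⟨update_zero_mem_chainOrderPolytope (comp_mem_chainOrderPolytope hy h hrank) hbk,
      Function.update_self ..⟩

/-- Let `b` be an element of rank `i ≤ k` (index `b.1 < k`) of `P_τ` with
`τ_i ≥ 2`, and let `F` be the face of the chain-order polytope of the
`k`-decomposition given by `x_b = 0`.  Then the coordinate projection
forgetting `x_b` (realized via any rank-preserving identification `j` of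
`P_τ̃` with `P_τ \ {b}`, where `τ̃` is `τ` with the `i`-th entry decreased by
one) is an affine isomorphism from `F` onto the chain-order polytope
`O_{C̃,O}(τ̃)`. -/
theorem face_zero_coordinate_iso (ℓ : ℕ) (τ : Fin ℓ → ℕ) (hτ : ∀ i, 0 < τ i)
    (k : ℕ) (hk : k ≤ ℓ) (b : MaxRanked ℓ τ) (hbk : (b.1 : ℕ) < k)
    (hb2 : 2 ≤ τ b.1)
    (j : MaxRanked ℓ (Function.update τ b.1 (τ b.1 - 1)) → MaxRanked ℓ τ)
    (hj : Function.Injective j)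
    (hjrank : ∀ p, (j p).1 = p.1)
    (hjrange : Set.range j = {q : MaxRanked ℓ τ | q ≠ b}) :
    Set.BijOn (fun x : MaxRanked ℓ τ → ℝ => x ∘ j)
      {x ∈ chainOrderPolytope ℓ τ k | x b = 0}
      (chainOrderPolytope ℓ (Function.update τ b.1 (τ b.1 - 1)) k) :=
  face_zero_coordinate_iso_general ℓ τ k b hbk hb2 j hj hjrank hjrange
end
end
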